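/- arXiv:2412.03119 — 2 statements merged into one kernel-verified Lean document; each statement's English description precedes it below -/
import Mathlib

section
/- The degenerate Eulerian numbers satisfy the recurrence A_λ(n,k) = ((n-k) + (n-1)λ) A_λ(n-1, k-1) + (k+1 - (n-1)λ) A_λ(n-1, k) for n ≥ 1 and 0 ≤ k ≤ n (with A_λ(m,j) = 0 for j < 0 or j > m). -/
open Finset PowerSeries

/-- Degenerate falling factorial `(x)_{n,λ} = x(x-λ)⋯(x-(n-1)λ)`. -/
noncomputable def dfall (l x : ℝ) (n : ℕ) : ℝ := ∏ i ∈ Finset.range n, (x - i * l)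

/-- Degenerate Eulerian number `A_λ(n,k) = ∑_{i=0}^k C(n+1,i)(-1)^i (k-i+1)_{n,λ}`. -/
noncomputable def degEulerianNum (l : ℝ) (n k : ℕ) : ℝ :=
  ∑ i ∈ Finset.range (k+1), ((n+1).choose i : ℝ) * (-1)^i * dfall l ((k : ℝ) - i + 1) n

/-- Degenerate Eulerian polynomial `A_{n,λ}(x) = ∑_{k=0}^n A_λ(n,k) x^k`. -/
noncomputable def degEulerianPoly (l : ℝ) (n : ℕ) (x : ℝ) : ℝ :=
  ∑ k ∈ Finset.range (n+1), degEulerianNum l n k * x^k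

/-- Generalized binomial coefficient `binom(y,m) = y(y-1)⋯(y-m+1)/m!`. -/
noncomputable def genBinom (y : ℝ) (m : ℕ) : ℝ :=
  (∏ i ∈ Finset.range m, (y - i)) / m.factorial

/-- Degenerate exponential `e_λ^x(t) = ∑_k (x)_{k,λ} t^k/k!` as a formal power series. -/
noncomputable def degExp (l x : ℝ) : PowerSeries ℝ :=
  PowerSeries.mk fun k => dfall l x k / k.factorial

/-- Degenerate Stirling number of the second kind (explicit formula). -/
noncomputable def degStirling2 (l : ℝ) (n k : ℕ) : ℝ :=
  (-1)^k / k.factorial * ∑ j ∈ Finset.range (k+1), (-1)^j * (k.choose j : ℝ) * dfall l j n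

/-!
Write `A_λ(n+1,k) = ∑ C(n+2,i) (-1)^i (k-i+1)_{n,λ} (x - i)` with `x = k+1-nλ`, peeling off the last
factor of the degenerate falling factorial. Pascal's rule together with `i C(n+2,i) = (n+2) C(n+1,i-1)`
gives `C(n+2,i) (x - i) = C(n+1,i) x + C(n+1,i-1) (x - n - 2)`, so the sum splits into
`x A_λ(n,k)` and, after shifting the index by one, `-(x - n - 2) A_λ(n,k-1)`.
-/

lemma dfall_succ (l x : ℝ) (n : ℕ) : dfall l x (n + 1) = dfall l x n * (x - n * l) :=
  prod_range_succ _ _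

lemma choose_succ_succ_mul_sub {R : Type*} [CommRing R] (n p : ℕ) (x : R) :
    ((n + 1).choose (p + 1) : R) * (x - (p + 1)) =
      (n.choose (p + 1) : R) * x + (n.choose p : R) * (x - (n + 1)) := by
  have absorption : (((n + 1) * n.choose p : ℕ) : R) = ((n + 1).choose (p + 1) * (p + 1) : ℕ) :=
    congrArg Nat.cast (Nat.add_one_mul_choose_eq n p)
  push_cast [Nat.choose_succ_succ'] at absorption ⊢
  linear_combination absorption

lemma sum_choose_succ_mul_sub {R : Type*} [CommRing R] (n k : ℕ) (g : ℕ → R) (x : R) :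
    ∑ i ∈ range (k + 1), ((n + 1).choose i : R) * g i * (x - i) =
      x * ∑ i ∈ range (k + 1), (n.choose i : R) * g i +
        (x - (n + 1)) * ∑ i ∈ range k, (n.choose i : R) * g (i + 1) := by
  rw [sum_range_succ', sum_range_succ' (fun i => (n.choose i : R) * g i), mul_add, mul_sum,
    mul_sum]
  have hterm : ∀ i ∈ range k, ((n + 1).choose (i + 1) : R) * g (i + 1) * (x - (i + 1 : ℕ)) =
      x * ((n.choose (i + 1) : R) * g (i + 1)) + (x - (n + 1)) * ((n.choose i : R) * g (i + 1)) := by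
    intro i _
    push_cast
    linear_combination g (i + 1) * choose_succ_succ_mul_sub n i x
  rw [sum_congr rfl hterm, sum_add_distrib]
  simp only [Nat.choose_zero_right, Nat.cast_one, Nat.cast_zero, sub_zero]
  ring

section

variable (l : ℝ) (n k : ℕ)

lemma degEulerianNum_eq_sum :
    degEulerianNum l n k =
      ∑ i ∈ range (k + 1), ((n + 1).choose i : ℝ) * ((-1) ^ i * dfall l ((k : ℝ) - i + 1) n) := by
  simp only [degEulerianNum, mul_assoc]

lemma degEulerianNum_succ_eq_sum :
    degEulerianNum l (n + 1) k =
      ∑ i ∈ range (k + 1), ((n + 1 + 1).choose i : ℝ) * ((-1) ^ i * dfall l ((k : ℝ) - i + 1) n) *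
        ((k + 1 - n * l) - i) := by
  refine sum_congr rfl fun i _ => ?_
  rw [dfall_succ]
  ring

lemma sum_shift_eq_neg_degEulerianNum_pred :
    ∑ i ∈ range k, ((n + 1).choose i : ℝ) *
        ((-1) ^ (i + 1) * dfall l ((k : ℝ) - (i + 1 : ℕ) + 1) n) =
      -(if k = 0 then 0 else degEulerianNum l n (k - 1)) := by
  rcases k with _ | j
  · simp
  · rw [if_neg j.succ_ne_zero, Nat.add_sub_cancel, degEulerianNum_eq_sum, ← sum_neg_distrib]
    refine sum_congr rfl fun i _ => ?_
    push_cast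
    ring_nf

end

theorem stmt7_general (l : ℝ) (n k : ℕ) (hn : 1 ≤ n) :
    degEulerianNum l n k =
      (((n : ℝ) - k) + ((n : ℝ) - 1) * l) *
        (if k = 0 then 0 else degEulerianNum l (n - 1) (k - 1)) +
      ((k : ℝ) + 1 - ((n : ℝ) - 1) * l) * degEulerianNum l (n - 1) k := by
  obtain ⟨m, rfl⟩ := Nat.exists_eq_add_of_le' hn
  rw [degEulerianNum_succ_eq_sum, sum_choose_succ_mul_sub, ← degEulerianNum_eq_sum,
    sum_shift_eq_neg_degEulerianNum_pred, Nat.add_sub_cancel]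
  push_cast
  ring

/-- for `n ≥ 1` and `0 ≤ k ≤ n`,
`A_λ(n,k) = ((n-k)+(n-1)λ) A_λ(n-1,k-1) + (k+1-(n-1)λ) A_λ(n-1,k)`,
where `A_λ(n-1,-1) = 0`. -/
theorem stmt7 (l : ℝ) (n k : ℕ) (hn : 1 ≤ n) (hk : k ≤ n) :
    degEulerianNum l n k =
      (((n : ℝ) - k) + ((n : ℝ) - 1) * l) *
        (if k = 0 then 0 else degEulerianNum l (n - 1) (k - 1)) +
      ((k : ℝ) + 1 - ((n : ℝ) - 1) * l) * degEulerianNum l (n - 1) k :=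
  stmt7_general l n k hn
end

section
/- For positive integers m, n: ∑_{j=0}^{n} A_{-λ}(n,j) binom(m+j+1, n+1) = (β_{n+1,λ}(m+1) - β_{n+1,λ})/(n+1). -/
open Finset PowerSeries

/-!
Summing Worpitzky's identity `(k)_{n,λ} = ∑_j A_{-λ}(n,j) C(k+j, n)` over `k = 0, …, m` and
applying the hockey-stick identity turns the left-hand side into `∑_{k=0}^m (k)_{n,λ}`. Since
`e_λ^{x+1}(t) = e_λ(t) e_λ^x(t)`, the degenerate Bernoulli polynomials satisfy
`β_{n+1,λ}(x+1) - β_{n+1,λ}(x) = (n+1) (x)_{n,λ}`, so the right-hand side telescopes to the same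
sum.

Worpitzky's identity comes from writing `∑_s (s)_{n,λ} t^s = N(t) / (1-t)^{n+1}`: the numerator
`N` has degree at most `n` because the `(n+1)`-st differences of the degree-`n` polynomial
`(x)_{n,λ}` vanish, and the same vanishing shows that its coefficients, read backwards, are the
`A_{-λ}(n,j)`.
-/

open scoped Polynomial

section OneSubXPow

variable {R : Type*} [CommRing R]

theorem PowerSeries.coeff_one_sub_X_pow (k i : ℕ) :
    coeff i ((1 - X : PowerSeries R) ^ k) = (-1) ^ i * k.choose i := by
  have h : (1 - X : PowerSeries R) = rescale (-1) ((1 + Polynomial.X : R[X]) : PowerSeries R) := by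
    simp [sub_eq_add_neg]
  rw [h, ← map_pow, coeff_rescale, ← Polynomial.coe_pow, Polynomial.coeff_coe,
    Polynomial.coeff_one_add_X_pow]

theorem PowerSeries.coeff_one_sub_X_pow_mul_mk (k r : ℕ) (f : ℕ → R) :
    coeff r ((1 - X) ^ k * mk f) = ∑ i ∈ range (r + 1), (-1) ^ i * k.choose i * f (r - i) := by
  rw [coeff_mul, Nat.sum_antidiagonal_eq_sum_range_succ_mk]
  simp only [coeff_one_sub_X_pow, coeff_mk]

theorem PowerSeries.eq_sum_coeff_one_sub_X_pow_mul_mk (n K : ℕ) (f : ℕ → R) :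
    f K = ∑ r ∈ range (K + 1),
      coeff r ((1 - X) ^ (n + 1) * mk f) * ((K - r + n).choose n : R) := by
  have h : mk f = (1 - X) ^ (n + 1) * mk f * mk fun t ↦ ((n + t).choose n : R) := by
    linear_combination (-mk f) * mk_add_choose_mul_one_sub_pow_eq_one (S := R) n
  conv_lhs => rw [← coeff_mk K f, h]
  rw [coeff_mul, Nat.sum_antidiagonal_eq_sum_range_succ_mk]
  simp only [coeff_mk, add_comm n]

end OneSubXPow

theorem dfall_eq_eval_prod (l x : ℝ) (n : ℕ) :
    dfall l x n = (∏ i ∈ range n, (Polynomial.X - Polynomial.C ((i : ℝ) * l))).eval x := by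
  simp [dfall, Polynomial.eval_prod]

theorem fwdDiff_iter_dfall (l : ℝ) (n : ℕ) :
    (fwdDiff 1)^[n + 1] (fun x ↦ dfall l x n) = 0 := by
  simp_rw [dfall_eq_eval_prod]
  exact Polynomial.fwdDiff_iter_eq_zero_of_degree_lt
    (by rw [Polynomial.natDegree_finsetProd_X_sub_C_eq_card, card_range]; omega)

theorem sum_range_neg_one_pow_mul_choose_mul_dfall (l y : ℝ) (n : ℕ) :
    ∑ i ∈ range (n + 2), (-1) ^ i * ((n + 1).choose i : ℝ) * dfall l (y - i) n = 0 := by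
  have h := congr_fun (fwdDiff_iter_dfall l n) (y - (n + 1))
  rw [fwdDiff_iter_eq_sum_shift, ← sum_range_reflect, Pi.zero_apply] at h
  refine (sum_congr rfl fun i hi ↦ ?_).trans h
  have hi : i ≤ n + 1 := Nat.lt_succ_iff.mp (mem_range.mp hi)
  rw [Nat.add_sub_cancel, Nat.sub_sub_self hi, Nat.choose_symm hi, nsmul_one, Nat.cast_sub hi,
    zsmul_eq_mul]
  push_cast
  rw [show y - (n + 1) + (n + 1 - i) = y - i by ring]

theorem dfall_neg (l x : ℝ) (n : ℕ) : dfall (-l) x n = (-1) ^ n * dfall l (-x) n := by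
  nth_rw 2 [← card_range n]
  rw [dfall, dfall, ← prod_const, ← prod_mul_distrib]
  exact prod_congr rfl fun i _ ↦ by ring

-- `N(t)` with `∑_s (s)_{n,λ} t^s = N(t) / (1-t)^{n+1}`.
noncomputable def dfallNumerator (l : ℝ) (n : ℕ) : PowerSeries ℝ :=
  (1 - X) ^ (n + 1) * PowerSeries.mk fun s ↦ dfall l s n

theorem coeff_dfallNumerator (l : ℝ) (n r : ℕ) :
    coeff r (dfallNumerator l n) =
      ∑ i ∈ range (r + 1), (-1) ^ i * ((n + 1).choose i : ℝ) * dfall l ((r : ℝ) - i) n := by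
  rw [dfallNumerator, coeff_one_sub_X_pow_mul_mk]
  refine sum_congr rfl fun i hi ↦ ?_
  rw [Nat.cast_sub (Nat.lt_succ_iff.mp (mem_range.mp hi))]

theorem coeff_dfallNumerator_of_lt (l : ℝ) {n r : ℕ} (h : n < r) :
    coeff r (dfallNumerator l n) = 0 := by
  rw [coeff_dfallNumerator, ← sum_range_neg_one_pow_mul_choose_mul_dfall l r n]
  refine (sum_subset (range_subset_range.mpr (by omega)) fun i _ hi ↦ ?_).symm
  rw [mem_range, not_lt] at hi
  rw [Nat.choose_eq_zero_of_lt (by omega), Nat.cast_zero, mul_zero, zero_mul]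

theorem coeff_dfallNumerator_sub (l : ℝ) {n j : ℕ} (hj : j ≤ n) :
    coeff (n - j) (dfallNumerator l n) = degEulerianNum (-l) n j := by
  have h := sum_range_neg_one_pow_mul_choose_mul_dfall l (n - j : ℕ) n
  rw [← sum_range_add_sum_Ico _ (by omega : n - j + 1 ≤ n + 2)] at h
  rw [coeff_dfallNumerator, eq_neg_of_add_eq_zero_left h,
    show Ico (n - j + 1) (n + 2) = Ico (n + 1 + 1 - (j + 1)) (n + 1 + 1 - 0) by congr 1; omega,
    ← sum_Ico_reflect _ 0 (by omega), ← sum_neg_distrib, degEulerianNum, range_eq_Ico]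
  refine sum_congr rfl fun i hi ↦ ?_
  have hi : i ≤ j := Nat.lt_succ_iff.mp (mem_Ico.mp hi).2
  rw [Nat.choose_symm (by omega), pow_sub₀ _ (by norm_num) (by omega : i ≤ n + 1), ← inv_pow,
    inv_neg_one, dfall_neg, Nat.cast_sub hj, Nat.cast_sub (by omega : i ≤ n + 1)]
  push_cast
  rw [show (n - j - (n + 1 - i) : ℝ) = -(j - i + 1) by ring]
  ring

theorem sum_degEulerianNum_mul_choose (l : ℝ) (n K : ℕ) :
    ∑ j ∈ range (n + 1), degEulerianNum (-l) n j * ((K + j).choose n : ℝ) = dfall l K n := by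
  set g : ℕ → ℝ := fun r ↦ coeff r (dfallNumerator l n) * ((K + n - r).choose n : ℝ)
  have hreflect : ∑ j ∈ range (n + 1), degEulerianNum (-l) n j * ((K + j).choose n : ℝ) =
      ∑ r ∈ range (n + 1), g r := by
    rw [← sum_range_reflect]
    refine sum_congr rfl fun r hr ↦ ?_
    have hr : r ≤ n := Nat.lt_succ_iff.mp (mem_range.mp hr)
    rw [Nat.add_sub_cancel, ← coeff_dfallNumerator_sub l (Nat.sub_le n r), Nat.sub_sub_self hr,
      ← Nat.add_sub_assoc hr]
  have hseries : dfall l K n = ∑ r ∈ range (K + 1), g r := by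
    refine (eq_sum_coeff_one_sub_X_pow_mul_mk n K fun s ↦ dfall l s n).trans
      (sum_congr rfl fun r hr ↦ ?_)
    simp only [g, dfallNumerator, Nat.sub_add_comm (Nat.lt_succ_iff.mp (mem_range.mp hr))]
  calc _ = ∑ r ∈ range (n + 1), g r := hreflect
    _ = ∑ r ∈ range (K + n + 1), g r := by
      refine sum_subset (range_subset_range.mpr (by omega)) fun r _ hr ↦ ?_
      rw [mem_range, not_lt] at hr
      simp only [g, coeff_dfallNumerator_of_lt l (by omega : n < r), zero_mul]
    _ = ∑ r ∈ range (K + 1), g r := by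
      refine (sum_subset (range_subset_range.mpr (by omega)) fun r hr hr' ↦ ?_).symm
      rw [mem_range] at hr hr'
      simp only [g, Nat.choose_eq_zero_of_lt (by omega : K + n - r < n), Nat.cast_zero, mul_zero]
    _ = dfall l K n := hseries.symm

theorem Nat.sum_range_add_choose_of_le {j n : ℕ} (hj : j ≤ n) (m : ℕ) :
    ∑ k ∈ range (m + 1), (k + j).choose n = (m + j + 1).choose (n + 1) := by
  induction m with
  | zero =>
    rw [zero_add, sum_range_one, zero_add]
    rcases hj.lt_or_eq with hj | rfl
    · rw [Nat.choose_eq_zero_of_lt hj, Nat.choose_eq_zero_of_lt (by omega)]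
    · simp
  | succ m ih =>
    rw [sum_range_succ, ih, Nat.choose_succ_succ' (m + 1 + j), add_comm, add_right_comm m 1 j]

theorem sum_range_dfall_eq_sum_degEulerianNum_mul_choose (l : ℝ) (m n : ℕ) :
    ∑ k ∈ range (m + 1), dfall l k n =
      ∑ j ∈ range (n + 1), degEulerianNum (-l) n j * ((m + j + 1).choose (n + 1) : ℝ) := by
  rw [sum_congr rfl fun k _ ↦ (sum_degEulerianNum_mul_choose l n k).symm, sum_comm]
  refine sum_congr rfl fun j hj ↦ ?_
  rw [← Nat.sum_range_add_choose_of_le (Nat.lt_succ_iff.mp (mem_range.mp hj)), Nat.cast_sum,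
    mul_sum]

theorem dfall_eq_mul_smeval_descPochhammer {l : ℝ} (hl : l ≠ 0) (x : ℝ) (n : ℕ) :
    dfall l x n = l ^ n * (descPochhammer ℤ n).smeval (x / l) := by
  rw [← Polynomial.aeval_eq_smeval, Polynomial.aeval_def, ← Polynomial.eval_map,
    descPochhammer_map, descPochhammer_eval_eq_prod_range, dfall]
  nth_rw 2 [← card_range n]
  rw [← prod_const, ← prod_mul_distrib]
  exact prod_congr rfl fun i _ ↦ by field_simp

theorem dfall_add (l x y : ℝ) (n : ℕ) :
    dfall l (x + y) n =
      ∑ ij ∈ antidiagonal n, (n.choose ij.1 : ℝ) * (dfall l x ij.1 * dfall l y ij.2) := by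
  rcases eq_or_ne l 0 with rfl | hl
  · simp only [dfall, mul_zero, sub_zero, prod_const, card_range]
    rw [add_pow, Nat.sum_antidiagonal_eq_sum_range_succ_mk]
    exact sum_congr rfl fun _ _ ↦ by ring
  · simp_rw [dfall_eq_mul_smeval_descPochhammer hl, add_div,
      Ring.descPochhammer_smeval_add _ (Commute.all (x / l) (y / l)), mul_sum]
    refine sum_congr rfl fun ij hij ↦ ?_
    rw [← mem_antidiagonal.mp hij, pow_add]
    ring

theorem degExp_add (l x y : ℝ) : degExp l (x + y) = degExp l x * degExp l y := by
  ext k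
  rw [coeff_mul]
  simp only [degExp, coeff_mk]
  rw [dfall_add, sum_div]
  refine sum_congr rfl fun ij hij ↦ ?_
  rw [← mem_antidiagonal.mp hij, Nat.cast_choose ℝ (Nat.le_add_right _ _),
    Nat.add_sub_cancel_left]
  field_simp

theorem degExp_one_sub_one_ne_zero (l : ℝ) : degExp l 1 - 1 ≠ 0 := fun h ↦ by
  simpa [degExp, dfall] using congrArg (coeff 1) h

def IsDegBernoulli (l : ℝ) (B : ℝ → ℕ → ℝ) : Prop :=
  ∀ x : ℝ, (X : PowerSeries ℝ) * degExp l x =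
    (degExp l 1 - 1) * PowerSeries.mk (fun n ↦ B x n / n.factorial)

theorem IsDegBernoulli.add_one_sub {l : ℝ} {B : ℝ → ℕ → ℝ} (hB : IsDegBernoulli l B)
    (x : ℝ) (k : ℕ) : B (x + 1) (k + 1) - B x (k + 1) = (k + 1) * dfall l x k := by
  have key : (degExp l 1 - 1) * (PowerSeries.mk (fun n ↦ B (x + 1) n / n.factorial) -
      PowerSeries.mk (fun n ↦ B x n / n.factorial)) = (degExp l 1 - 1) * (X * degExp l x) := by
    rw [mul_sub, ← hB, ← hB, add_comm x, degExp_add]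
    ring
  have hcoeff := congrArg (coeff (k + 1)) (mul_left_cancel₀ (degExp_one_sub_one_ne_zero l) key)
  rw [map_sub, coeff_succ_X_mul] at hcoeff
  simp only [coeff_mk, degExp, Nat.factorial_succ, Nat.cast_mul] at hcoeff
  field_simp at hcoeff
  exact_mod_cast hcoeff

theorem stmt14_general (l : ℝ) (B : ℝ → ℕ → ℝ)
    (hB : ∀ x : ℝ, (PowerSeries.X : PowerSeries ℝ) * degExp l x =
      (degExp l 1 - 1) * PowerSeries.mk (fun n => B x n / n.factorial))
    (m n : ℕ) :
    ∑ j ∈ Finset.range (n + 1), degEulerianNum (-l) n j * ((m + j + 1).choose (n + 1) : ℝ) =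
      (B ((m : ℝ) + 1) (n + 1) - B 0 (n + 1)) / (n + 1) := by
  have htelescope := sum_range_sub (fun k : ℕ ↦ B k (n + 1)) (m + 1)
  push_cast at htelescope
  rw [← sum_range_dfall_eq_sum_degEulerianNum_mul_choose, eq_div_iff (by positivity),
    ← htelescope, sum_mul]
  refine sum_congr rfl fun k _ ↦ ?_
  rw [IsDegBernoulli.add_one_sub hB]
  ring

/-- with `B x n = β_{n,λ}(x)` the degenerate Bernoulli polynomials, for
`m, n ≥ 1`: `∑_{j=0}^n A_{-λ}(n,j) binom(m+j+1, n+1) = (β_{n+1,λ}(m+1) - β_{n+1,λ})/(n+1)`. -/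
theorem stmt14 (l : ℝ) (B : ℝ → ℕ → ℝ)
    (hB : ∀ x : ℝ, (PowerSeries.X : PowerSeries ℝ) * degExp l x =
      (degExp l 1 - 1) * PowerSeries.mk (fun n => B x n / n.factorial))
    (m n : ℕ) (hm : 1 ≤ m) (hn : 1 ≤ n) :
    ∑ j ∈ Finset.range (n + 1), degEulerianNum (-l) n j * ((m + j + 1).choose (n + 1) : ℝ) =
      (B ((m : ℝ) + 1) (n + 1) - B 0 (n + 1)) / (n + 1) :=
  stmt14_general l B hB m n
end
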